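/- arXiv:1904.06944 — 2 statements merged into one kernel-verified Lean document; each statement's English description precedes it below -/
import Mathlib

section
/- Let A and B be unital *-algebras over ℂ, Θ : A ⊗ B → A ⊗ B a unital *-algebra homomorphism, ω a positive linear functional on A, σ a positive linear functional on B, and B̂ = star b * b for some b ∈ B. Then the pre-instrument applied to ω yields a positive linear functional: for every x ∈ A, ℐ_σ(B̂)(ω)(star x * x) = (ω ⊗ σ)(Θ(star x * x ⊗ B̂)) is a nonnegative real number. -/
/-!
Since `Θ` is a `*`-homomorphism, it sends `star x * x ⊗ star b * b = star y * y`, with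
`y = x ⊗ b`, to `star (Θ y) * Θ y`; so it suffices that `ω ⊗ σ` is nonnegative on every
`star y * y`. Writing `y = ∑ aᵢ ⊗ bᵢ`, that value is the sum of all entries of the Hadamard
product of the Gram matrices `(ω (star aᵢ * aⱼ))ᵢⱼ` and `(σ (star bᵢ * bⱼ))ᵢⱼ`. Both are positive
semidefinite, hence so is their Hadamard product by the Schur product theorem, and the sum of
the entries of a positive semidefinite matrix is its quadratic form at the all-ones vector.
-/

open scoped TensorProduct

noncomputable section

/-- A linear functional on a unital *-algebra over ℂ is *positive* if it takes
nonnegative real values on elements of the form `star x * x`. -/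
def IsPositiveLF {A : Type} [Ring A] [Algebra ℂ A] [StarRing A] (φ : A →ₗ[ℂ] ℂ) : Prop :=
  ∀ x : A, ∃ r : ℝ, 0 ≤ r ∧ φ (star x * x) = (r : ℂ)

/-- A *state* on a unital *-algebra over ℂ: a positive, normalised linear functional
compatible with the star operation. -/
def IsState {A : Type} [Ring A] [Algebra ℂ A] [StarRing A] (φ : A →ₗ[ℂ] ℂ) : Prop :=
  IsPositiveLF φ ∧ φ 1 = 1 ∧ ∀ x : A, φ (star x) = starRingEnd ℂ (φ x)

/-- An element of a *-algebra is a *sum of squares* if it is a finite sum of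
elements of the form `star c * c`. -/
def IsSumOfStarSquares {A : Type} [Ring A] [StarRing A] (a : A) : Prop :=
  ∃ (n : ℕ) (c : Fin n → A), a = ∑ i, star (c i) * c i

/-- The product functional `ω ⊗ σ`, determined by `(ω ⊗ σ)(a ⊗ b) = ω(a) * σ(b)`. -/
def prodLF {A B : Type} [AddCommGroup A] [Module ℂ A] [AddCommGroup B] [Module ℂ B]
    (ω : A →ₗ[ℂ] ℂ) (σ : B →ₗ[ℂ] ℂ) : A ⊗[ℂ] B →ₗ[ℂ] ℂ :=
  (TensorProduct.lid ℂ ℂ).toLinearMap ∘ₗ TensorProduct.map ω σ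

lemma prodLF_tmul {A B : Type} [AddCommGroup A] [Module ℂ A] [AddCommGroup B] [Module ℂ B]
    (ω : A →ₗ[ℂ] ℂ) (σ : B →ₗ[ℂ] ℂ) (a : A) (b : B) :
    prodLF ω σ (a ⊗ₜ[ℂ] b) = ω a * σ b := by
  simp [prodLF, smul_eq_mul, mul_comm]

/-- The slice map `η_σ : A ⊗ B → A`, determined by `η_σ(a ⊗ b) = σ(b) • a`. -/
def sliceLF {A B : Type} [AddCommGroup A] [Module ℂ A] [AddCommGroup B] [Module ℂ B]
    (σ : B →ₗ[ℂ] ℂ) : A ⊗[ℂ] B →ₗ[ℂ] A :=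
  (TensorProduct.rid ℂ A).toLinearMap ∘ₗ TensorProduct.map LinearMap.id σ

lemma sliceLF_tmul {A B : Type} [AddCommGroup A] [Module ℂ A] [AddCommGroup B] [Module ℂ B]
    (σ : B →ₗ[ℂ] ℂ) (a : A) (b : B) : sliceLF σ (a ⊗ₜ[ℂ] b) = σ b • a := by
  simp [sliceLF]

/-- The star operation on the algebraic tensor product `A ⊗[ℂ] B`, determined by
`star (a ⊗ b) = star a ⊗ star b` (it is additive). -/
def tensorStar {A B : Type} [AddCommGroup A] [Module ℂ A] [StarAddMonoid A] [StarModule ℂ A]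
    [AddCommGroup B] [Module ℂ B] [StarAddMonoid B] [StarModule ℂ B] :
    A ⊗[ℂ] B →+ A ⊗[ℂ] B :=
  TensorProduct.liftAddHom
    { toFun := fun a =>
        { toFun := fun b => star a ⊗ₜ[ℂ] star b
          map_zero' := by simp
          map_add' := fun b b' => by simp [star_add, TensorProduct.tmul_add] }
      map_zero' := by ext b; simp
      map_add' := fun a a' => by ext b; simp [star_add, TensorProduct.add_tmul] }
    (fun c a b => by
      simp only [AddMonoidHom.coe_mk, ZeroHom.coe_mk, star_smul, starRingEnd_apply,
        TensorProduct.smul_tmul, TensorProduct.smul_tmul'])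

@[simp] lemma tensorStar_tmul {A B : Type} [AddCommGroup A] [Module ℂ A] [StarAddMonoid A]
    [StarModule ℂ A] [AddCommGroup B] [Module ℂ B] [StarAddMonoid B] [StarModule ℂ B]
    (a : A) (b : B) : tensorStar (a ⊗ₜ[ℂ] b) = star a ⊗ₜ[ℂ] star b := rfl

/-- The pre-instrument `ℐ_σ(B̂)` associated to a coupling map `Θ`: it sends the
functional `ω` to the functional `a ↦ (ω ⊗ σ)(Θ(a ⊗ B̂))`. -/
def preInstrument {A B : Type} [Ring A] [Algebra ℂ A] [Ring B] [Algebra ℂ B]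
    (Θ : A ⊗[ℂ] B →ₗ[ℂ] A ⊗[ℂ] B) (σ : B →ₗ[ℂ] ℂ) (Bhat : B)
    (ω : A →ₗ[ℂ] ℂ) : A →ₗ[ℂ] ℂ :=
  prodLF ω σ ∘ₗ Θ ∘ₗ (TensorProduct.mk ℂ A B).flip Bhat

variable {A B : Type}
  [Ring A] [Algebra ℂ A] [StarRing A] [StarModule ℂ A]
  [Ring B] [Algebra ℂ B] [StarRing B] [StarModule ℂ B]

open scoped ComplexOrder

open Matrix

theorem Complex.exists_ofReal_eq_iff_nonneg {z : ℂ} : (∃ r : ℝ, 0 ≤ r ∧ z = r) ↔ 0 ≤ z := by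
  rw [RCLike.nonneg_iff_exists_ofReal]
  exact exists_congr fun r => and_congr_right fun _ => eq_comm

theorem Matrix.PosSemidef.sum_sum_nonneg {n R : Type*} [Fintype n] [Ring R] [PartialOrder R]
    [StarRing R] {M : Matrix n n R} (hM : M.PosSemidef) : 0 ≤ ∑ i, ∑ j, M i j := by
  simpa [dotProduct, mulVec] using hM.dotProduct_mulVec_nonneg 1

section PositiveFunctional

variable {R : Type} [Ring R] [Algebra ℂ R] [StarRing R] {φ : R →ₗ[ℂ] ℂ}

theorem isPositiveLF_iff_nonneg : IsPositiveLF φ ↔ ∀ x : R, 0 ≤ φ (star x * x) :=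
  forall_congr' fun _ => Complex.exists_ofReal_eq_iff_nonneg

theorem IsPositiveLF.map_star_mul_comm [StarModule ℂ R] (hφ : IsPositiveLF φ) (x y : R) :
    φ (star y * x) = starRingEnd ℂ (φ (star x * y)) := by
  -- polarization: `φ (star z * z)` is real for `z = x + y` and for `z = x + I • y`
  have im_zero : ∀ z : R, (φ (star z * z)).im = 0 := fun z =>
    ((Complex.nonneg_iff.mp (isPositiveLF_iff_nonneg.mp hφ z)).2).symm
  have h_add := im_zero (x + y)
  have h_add_I := im_zero (x + Complex.I • y)
  simp only [star_add, star_smul, add_mul, mul_add, smul_mul_assoc, mul_smul_comm,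
    map_add, map_smul, Complex.star_def, Complex.conj_I] at h_add h_add_I
  apply Complex.ext <;> simp at h_add h_add_I ⊢ <;> linarith [im_zero x, im_zero y]

def gramMatrix {ι : Type*} (φ : R →ₗ[ℂ] ℂ) (v : ι → R) : Matrix ι ι ℂ :=
  Matrix.of fun i j => φ (star (v i) * v j)

theorem star_dotProduct_gramMatrix_mulVec [StarModule ℂ R] {ι : Type*} [Fintype ι] (v : ι → R)
    (c : ι → ℂ) :
    star c ⬝ᵥ (gramMatrix φ v *ᵥ c) = φ (star (∑ i, c i • v i) * ∑ j, c j • v j) := by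
  rw [star_sum, Finset.sum_mul_sum, map_sum]
  simp only [dotProduct, mulVec, gramMatrix, of_apply, Pi.star_apply, Finset.mul_sum, map_sum,
    star_smul, smul_mul_smul_comm, map_smul, smul_eq_mul]
  exact Finset.sum_congr rfl fun i _ => Finset.sum_congr rfl fun j _ => by ring

theorem IsPositiveLF.posSemidef_gramMatrix [StarModule ℂ R] (hφ : IsPositiveLF φ) {ι : Type*}
    [Fintype ι] (v : ι → R) : (gramMatrix φ v).PosSemidef := by
  refine .of_dotProduct_mulVec_nonneg ?_ fun c => ?_
  · ext i j
    exact (hφ.map_star_mul_comm (v j) (v i)).symm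
  · rw [star_dotProduct_gramMatrix_mulVec]
    exact isPositiveLF_iff_nonneg.mp hφ _

end PositiveFunctional

theorem prodLF_tensorStar_sum_mul_sum {ι : Type*} [Fintype ι] (ω : A →ₗ[ℂ] ℂ) (σ : B →ₗ[ℂ] ℂ)
    (a : ι → A) (b : ι → B) :
    prodLF ω σ (tensorStar (∑ i, a i ⊗ₜ[ℂ] b i) * ∑ j, a j ⊗ₜ[ℂ] b j) =
      ∑ i, ∑ j, (gramMatrix ω a ⊙ gramMatrix σ b) i j := by
  simp only [map_sum, tensorStar_tmul, Finset.sum_mul_sum, Algebra.TensorProduct.tmul_mul_tmul,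
    prodLF_tmul, hadamard_apply, gramMatrix, of_apply]

theorem IsPositiveLF.prodLF_tensorStar_mul_self_nonneg {ω : A →ₗ[ℂ] ℂ} {σ : B →ₗ[ℂ] ℂ}
    (hω : IsPositiveLF ω) (hσ : IsPositiveLF σ) (y : A ⊗[ℂ] B) :
    0 ≤ prodLF ω σ (tensorStar y * y) := by
  obtain ⟨S, rfl⟩ := TensorProduct.exists_finset y
  rw [← Finset.sum_coe_sort S, prodLF_tensorStar_sum_mul_sum]
  exact ((hω.posSemidef_gramMatrix _).hadamard (hσ.posSemidef_gramMatrix _)).sum_sum_nonneg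

/-- for `B̂ = star b * b`, the pre-instrument applied to a positive
functional yields a positive functional:
`(ω ⊗ σ)(Θ(star x * x ⊗ B̂))` is a nonnegative real. -/
theorem preinstrument_positive
    (Θ : A ⊗[ℂ] B →ₐ[ℂ] A ⊗[ℂ] B)
    (hΘstar : ∀ y : A ⊗[ℂ] B, Θ (tensorStar y) = tensorStar (Θ y))
    (ω : A →ₗ[ℂ] ℂ) (hω : IsPositiveLF ω) (σ : B →ₗ[ℂ] ℂ) (hσ : IsPositiveLF σ)
    (b : B) (x : A) :
    ∃ r : ℝ, 0 ≤ r ∧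
      preInstrument Θ.toLinearMap σ (star b * b) ω (star x * x) = (r : ℂ) := by
  have h_square : (star x * x) ⊗ₜ[ℂ] (star b * b) = tensorStar (x ⊗ₜ[ℂ] b) * x ⊗ₜ[ℂ] b := by
    rw [tensorStar_tmul, Algebra.TensorProduct.tmul_mul_tmul]
  have h_eval : preInstrument Θ.toLinearMap σ (star b * b) ω (star x * x) =
      prodLF ω σ (tensorStar (Θ (x ⊗ₜ[ℂ] b)) * Θ (x ⊗ₜ[ℂ] b)) := by
    simp only [preInstrument, LinearMap.comp_apply, LinearMap.flip_apply, TensorProduct.mk_apply,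
      AlgHom.toLinearMap_apply, h_square, map_mul, hΘstar]
  rw [h_eval, Complex.exists_ofReal_eq_iff_nonneg]
  exact hω.prodLF_tensorStar_mul_self_nonneg hσ _
end
end

section
/- Let A and B be unital *-algebras over ℂ, Θ : A ⊗ B → A ⊗ B a unital *-algebra homomorphism, and σ a state on B. If B̂ ∈ B is an effect in the sense that both B̂ and 1 − B̂ are sums of squares in B, then the induced observable ε_σ(B̂) = η_σ(Θ(1 ⊗ B̂)) is an effect in A: both ε_σ(B̂) and 1 − ε_σ(B̂) are sums of squares in A. -/
/-!
Because `Θ` is a unital *-homomorphism, `Θ (1 ⊗ star c * c) = star (Θ (1 ⊗ c)) * Θ (1 ⊗ c)`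
and `η_σ ∘ Θ` maps `1 - B̂` to `1 - ε_σ(B̂)`, so it suffices that `η_σ (star x * x)` is a sum
of squares for every `x = ∑ aᵢ ⊗ bᵢ`. That slice equals `∑ᵢⱼ Mᵢⱼ • star aᵢ * aⱼ`, where the Gram
matrix `Mᵢⱼ = σ (star bᵢ * bⱼ)` is positive semidefinite by positivity of `σ`; factoring
`M = Nᴴ N` rewrites it as `∑ₖ star dₖ * dₖ` with `dₖ = ∑ⱼ Nₖⱼ • aⱼ`.
-/

open scoped TensorProduct

noncomputable section

open scoped ComplexOrder Matrix

section SumOfStarSquares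

variable {R : Type} [Ring R] [StarRing R]

lemma isSumOfStarSquares_zero : IsSumOfStarSquares (0 : R) := ⟨0, Fin.elim0, by simp⟩

lemma isSumOfStarSquares_star_mul_self (c : R) : IsSumOfStarSquares (star c * c) :=
  ⟨1, fun _ => c, by simp⟩

lemma IsSumOfStarSquares.add {p q : R} (hp : IsSumOfStarSquares p)
    (hq : IsSumOfStarSquares q) : IsSumOfStarSquares (p + q) := by
  obtain ⟨n, c, rfl⟩ := hp
  obtain ⟨m, d, rfl⟩ := hq
  exact ⟨n + m, Fin.append c d, by simp [Fin.sum_univ_add]⟩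

lemma IsSumOfStarSquares.sum {ι : Type*} (s : Finset ι) {f : ι → R}
    (hf : ∀ i ∈ s, IsSumOfStarSquares (f i)) : IsSumOfStarSquares (∑ i ∈ s, f i) :=
  Finset.sum_induction f IsSumOfStarSquares (fun _ _ => IsSumOfStarSquares.add)
    isSumOfStarSquares_zero hf

end SumOfStarSquares

open scoped MatrixOrder Matrix.Norms.L2Operator in
lemma Matrix.PosSemidef.exists_eq_conjTranspose_mul_self {ι 𝕜 : Type*} [Fintype ι] [RCLike 𝕜]
    {M : Matrix ι ι 𝕜} (hM : M.PosSemidef) : ∃ N : Matrix ι ι 𝕜, M = Nᴴ * N := by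
  classical
  exact CStarAlgebra.nonneg_iff_eq_star_mul_self.mp hM.nonneg

section Gram

variable {A : Type} [Ring A] [Algebra ℂ A] [StarRing A] [StarModule ℂ A]
  {ι : Type} [Fintype ι]

lemma IsPositiveLF.posSemidef_gram {φ : A →ₗ[ℂ] ℂ} (hpos : IsPositiveLF φ)
    (hstar : ∀ x : A, φ (star x) = starRingEnd ℂ (φ x)) (b : ι → A) :
    (Matrix.of fun i j => φ (star (b i) * b j)).PosSemidef := by
  refine Matrix.PosSemidef.of_dotProduct_mulVec_nonneg ?_ fun x => ?_
  · ext i j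
    simp [← hstar]
  · have hquad : star x ⬝ᵥ (Matrix.of fun i j => φ (star (b i) * b j)) *ᵥ x
        = φ (star (∑ j, x j • b j) * ∑ j, x j • b j) := by
      rw [star_sum, Finset.sum_mul_sum]
      simp only [star_smul, smul_mul_assoc, mul_smul_comm, map_sum, map_smul, smul_smul,
        smul_eq_mul, dotProduct, Matrix.mulVec, Matrix.of_apply, Pi.star_apply, Finset.mul_sum]
      exact Finset.sum_congr rfl fun i _ => Finset.sum_congr rfl fun j _ => by ring
    obtain ⟨r, hr, hφ⟩ := hpos (∑ j, x j • b j)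
    rw [hquad, hφ]
    exact_mod_cast hr

lemma Matrix.PosSemidef.isSumOfStarSquares_sum_smul_star_mul {M : Matrix ι ι ℂ}
    (hM : M.PosSemidef) (a : ι → A) :
    IsSumOfStarSquares (∑ i, ∑ j, M i j • (star (a i) * a j)) := by
  obtain ⟨N, rfl⟩ := hM.exists_eq_conjTranspose_mul_self
  have hsum : ∑ i, ∑ j, (Nᴴ * N) i j • (star (a i) * a j)
      = ∑ k, star (∑ j, N k j • a j) * ∑ j, N k j • a j := calc
    _ = ∑ i, ∑ j, ∑ k, (star (N k i) * N k j) • (star (a i) * a j) := by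
      simp only [Matrix.mul_apply, Matrix.conjTranspose_apply, Finset.sum_smul]
    _ = ∑ k, ∑ i, ∑ j, (star (N k i) * N k j) • (star (a i) * a j) :=
      (Finset.sum_congr rfl fun _ _ => Finset.sum_comm).trans Finset.sum_comm
    _ = _ := by
      simp only [star_sum, star_smul, Finset.sum_mul_sum, smul_mul_assoc, mul_smul_comm,
        smul_smul, mul_comm (N _ _)]
  rw [hsum]
  exact IsSumOfStarSquares.sum _ fun k _ => isSumOfStarSquares_star_mul_self _

end Gram

lemma sliceLF_one {A B : Type} [Ring A] [Algebra ℂ A] [Ring B] [Algebra ℂ B] {σ : B →ₗ[ℂ] ℂ}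
    (hσ : σ 1 = 1) : sliceLF σ (1 : A ⊗[ℂ] B) = 1 := by
  rw [Algebra.TensorProduct.one_def, sliceLF_tmul, hσ, one_smul]

section Slice

variable {A B : Type} [Ring A] [Algebra ℂ A] [StarRing A] [StarModule ℂ A]
  [Ring B] [Algebra ℂ B] [StarRing B] [StarModule ℂ B] {σ : B →ₗ[ℂ] ℂ}

lemma sliceLF_tensorStar_sum_tmul_mul {ι : Type} [Fintype ι] (a : ι → A) (b : ι → B) :
    sliceLF σ (tensorStar (∑ i, a i ⊗ₜ[ℂ] b i) * ∑ i, a i ⊗ₜ[ℂ] b i)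
      = ∑ i, ∑ j, σ (star (b i) * b j) • (star (a i) * a j) := by
  simp [map_sum, Finset.sum_mul_sum, Algebra.TensorProduct.tmul_mul_tmul, sliceLF_tmul]

lemma isSumOfStarSquares_sliceLF_tensorStar_mul_self (hpos : IsPositiveLF σ)
    (hstar : ∀ x : B, σ (star x) = starRingEnd ℂ (σ x)) (c : A ⊗[ℂ] B) :
    IsSumOfStarSquares (sliceLF σ (tensorStar c * c)) := by
  obtain ⟨S, rfl⟩ := TensorProduct.exists_finset c
  rw [← Finset.sum_coe_sort S fun p => p.1 ⊗ₜ[ℂ] p.2, sliceLF_tensorStar_sum_tmul_mul]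
  exact (hpos.posSemidef_gram hstar _).isSumOfStarSquares_sum_smul_star_mul _

lemma isSumOfStarSquares_sliceLF_apply_one_tmul (Θ : A ⊗[ℂ] B →ₐ[ℂ] A ⊗[ℂ] B)
    (hΘstar : ∀ x : A ⊗[ℂ] B, Θ (tensorStar x) = tensorStar (Θ x)) (hpos : IsPositiveLF σ)
    (hstar : ∀ x : B, σ (star x) = starRingEnd ℂ (σ x)) {x : B}
    (hx : IsSumOfStarSquares x) : IsSumOfStarSquares (sliceLF σ (Θ ((1 : A) ⊗ₜ[ℂ] x))) := by
  obtain ⟨n, c, rfl⟩ := hx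
  have hsquare (b : B) :
      (1 : A) ⊗ₜ[ℂ] (star b * b) = tensorStar ((1 : A) ⊗ₜ[ℂ] b) * (1 : A) ⊗ₜ[ℂ] b := by
    simp [Algebra.TensorProduct.tmul_mul_tmul]
  simp only [TensorProduct.tmul_sum, hsquare, map_sum, map_mul, hΘstar]
  exact IsSumOfStarSquares.sum _ fun i _ =>
    isSumOfStarSquares_sliceLF_tensorStar_mul_self hpos hstar _

end Slice

variable {A B : Type}
  [Ring A] [Algebra ℂ A] [StarRing A] [StarModule ℂ A]
  [Ring B] [Algebra ℂ B] [StarRing B] [StarModule ℂ B]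

/-- if `B̂` is an effect in `B` (both `B̂` and `1 − B̂` are sums of
squares), then the induced observable `ε_σ(B̂)` is an effect in `A`. -/
theorem induced_observable_effect
    (Θ : A ⊗[ℂ] B →ₐ[ℂ] A ⊗[ℂ] B)
    (hΘstar : ∀ x : A ⊗[ℂ] B, Θ (tensorStar x) = tensorStar (Θ x))
    (σ : B →ₗ[ℂ] ℂ) (hσ : IsState σ) (Bhat : B)
    (hB : IsSumOfStarSquares Bhat) (hB' : IsSumOfStarSquares (1 - Bhat)) :
    IsSumOfStarSquares (sliceLF σ (Θ ((1 : A) ⊗ₜ[ℂ] Bhat))) ∧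
      IsSumOfStarSquares (1 - sliceLF σ (Θ ((1 : A) ⊗ₜ[ℂ] Bhat))) := by
  obtain ⟨hpos, hσ1, hstar⟩ := hσ
  have hcompl : sliceLF σ (Θ ((1 : A) ⊗ₜ[ℂ] (1 - Bhat)))
      = 1 - sliceLF σ (Θ ((1 : A) ⊗ₜ[ℂ] Bhat)) := by
    rw [TensorProduct.tmul_sub, ← Algebra.TensorProduct.one_def, map_sub, map_one, map_sub,
      sliceLF_one hσ1]
  exact ⟨isSumOfStarSquares_sliceLF_apply_one_tmul Θ hΘstar hpos hstar hB,
    hcompl ▸ isSumOfStarSquares_sliceLF_apply_one_tmul Θ hΘstar hpos hstar hB'⟩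
end
end
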